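/- Fix q and u = (c, s) with c_ℓ > 0 for all ℓ. Then the impedance matrix Z_q(u) = -ω_q²(M + A_q) - i ω_q (B_q + C) + K + S is invertible. -/

import Mathlib

/-!
Write `Z_q(u) = X - i Y` with `X` real symmetric and `Y = ω_q (B_q + C)` real positive definite.
If `Z v = 0`, then `0 = Im (v* Z v) = -v* Y v`, because `v* X v` is real; positivity of `Y`
forces `v = 0`.
-/

open Matrix Complex

/-- The impedance matrix `Z_q(u) = -ω_q²(M + A_q) - i ω_q (B_q + C) + K + S`,
where `u = (c, s)`, `C = diagonal c` and `S = diagonal s`. -/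
noncomputable def Zmat {Nb Nf : ℕ} (ω : Fin Nf → ℝ)
    (A B : Fin Nf → Matrix (Fin Nb) (Fin Nb) ℝ)
    (M K : Matrix (Fin Nb) (Fin Nb) ℝ)
    (u : (Fin Nb → ℝ) × (Fin Nb → ℝ)) (q : Fin Nf) :
    Matrix (Fin Nb) (Fin Nb) ℂ :=
  ((-(ω q) ^ 2) • (M + A q) + K + Matrix.diagonal u.2).map (fun x => (x : ℂ))
    + Complex.I • (((-(ω q)) • (B q + Matrix.diagonal u.1)).map (fun x => (x : ℂ)))

open scoped ComplexOrder

namespace Matrix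

variable {n : Type*}

theorem IsSymm.isHermitian_map_ofReal {P : Matrix n n ℝ} (hP : P.IsSymm) :
    (P.map ofReal).IsHermitian :=
  (isHermitian_iff_isSymm.2 hP).map _ fun _ => (conj_ofReal _).symm

variable [Fintype n]

theorem isUnit_add_I_smul_of_posDef [DecidableEq n] {X Y : Matrix n n ℂ} (hX : X.IsHermitian)
    (hY : Y.PosDef) : IsUnit (X + I • Y) := by
  rw [isUnit_iff_isUnit_det, isUnit_iff_ne_zero]
  intro hdet
  obtain ⟨v, hv0, hv⟩ := exists_mulVec_eq_zero_iff.2 hdet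
  have hquad : star v ⬝ᵥ X *ᵥ v + I * (star v ⬝ᵥ Y *ᵥ v) = 0 := by
    rw [← smul_eq_mul, ← dotProduct_smul, ← smul_mulVec, ← dotProduct_add, ← add_mulVec, hv,
      dotProduct_zero]
  have hXreal : (star v ⬝ᵥ X *ᵥ v).im = 0 := hX.im_star_dotProduct_mulVec_self v
  have hYzero : (star v ⬝ᵥ Y *ᵥ v).re = 0 := by
    simpa [hXreal] using congrArg Complex.im hquad
  exact (Complex.pos_iff.1 (hY.dotProduct_mulVec_pos hv0)).1.ne' hYzero

theorem isUnit_sub_I_smul_of_posDef [DecidableEq n] {X Y : Matrix n n ℂ} (hX : X.IsHermitian)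
    (hY : Y.PosDef) : IsUnit (X - I • Y) := by
  have := (isUnit_add_I_smul_of_posDef hX.neg hY).neg
  rwa [neg_add, neg_neg, ← sub_eq_add_neg] at this

theorem re_star_dotProduct_map_ofReal_mulVec (P : Matrix n n ℝ) (v : n → ℂ) :
    (star v ⬝ᵥ P.map ofReal *ᵥ v).re
      = (fun i => (v i).re) ⬝ᵥ P *ᵥ (fun i => (v i).re)
        + (fun i => (v i).im) ⬝ᵥ P *ᵥ (fun i => (v i).im) := by
  simp only [dotProduct, mulVec, map_apply, re_sum, Finset.mul_sum, ← Finset.sum_add_distrib]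
  refine Finset.sum_congr rfl fun i _ => Finset.sum_congr rfl fun j _ => ?_
  simp only [Pi.star_apply, mul_re, star_def, conj_re, conj_im, ofReal_re, ofReal_im, im_ofReal_mul]
  ring

theorem PosDef.map_ofReal {P : Matrix n n ℝ} (hP : P.PosDef) : (P.map ofReal).PosDef := by
  have hPc := (isHermitian_iff_isSymm.1 hP.isHermitian).isHermitian_map_ofReal
  refine .of_dotProduct_mulVec_pos hPc fun v hv => Complex.pos_iff.2 ⟨?_, ?_⟩
  · have hpos (w : n → ℝ) (hw : w ≠ 0) : 0 < w ⬝ᵥ P *ᵥ w := by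
      simpa using hP.dotProduct_mulVec_pos hw
    have hnonneg (w : n → ℝ) : 0 ≤ w ⬝ᵥ P *ᵥ w := by
      simpa using hP.posSemidef.dotProduct_mulVec_nonneg w
    rw [re_star_dotProduct_map_ofReal_mulVec]
    by_cases hre : (fun i => (v i).re) = 0
    · have him : (fun i => (v i).im) ≠ 0 := fun him =>
        hv <| funext fun i => Complex.ext (congrFun hre i) (congrFun him i)
      exact add_pos_of_nonneg_of_pos (hnonneg _) (hpos _ him)
    · exact add_pos_of_pos_of_nonneg (hpos _ hre) (hnonneg _)
  · exact (hPc.im_star_dotProduct_mulVec_self v).symm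

end Matrix

theorem Zmat_eq_sub_I_smul {Nb Nf : ℕ} (ω : Fin Nf → ℝ) (A B : Fin Nf → Matrix (Fin Nb) (Fin Nb) ℝ)
    (M K : Matrix (Fin Nb) (Fin Nb) ℝ) (u : (Fin Nb → ℝ) × (Fin Nb → ℝ)) (q : Fin Nf) :
    Zmat ω A B M K u q = ((-(ω q) ^ 2) • (M + A q) + K + diagonal u.2).map ofReal
      - I • (ω q • (B q + diagonal u.1)).map ofReal := by
  rw [Zmat, neg_smul (ω q), Matrix.map_neg _ ofReal_neg, smul_neg, sub_eq_add_neg]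

theorem impedance_matrix_invertible_general
    (Nb Nf : ℕ)
    (ω : Fin Nf → ℝ) (hω : ∀ q, 0 < ω q)
    (A B : Fin Nf → Matrix (Fin Nb) (Fin Nb) ℝ)
    (hA : ∀ q, (A q).IsSymm) (hB : ∀ q, (B q).IsSymm)
    (hBpsd : ∀ (q : Fin Nf) (v : Fin Nb → ℝ), 0 ≤ v ⬝ᵥ (B q).mulVec v)
    (M K : Matrix (Fin Nb) (Fin Nb) ℝ) (hM : M.IsDiag) (hK : K.IsDiag)
    (u : (Fin Nb → ℝ) × (Fin Nb → ℝ)) (hc : ∀ ℓ, 0 < u.1 ℓ)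
    (q : Fin Nf) :
    IsUnit (Zmat ω A B M K u q) := by
  have hX : ((-(ω q) ^ 2) • (M + A q) + K + diagonal u.2).IsSymm :=
    (((hM.isSymm.add (hA q)).smul _).add hK.isSymm).add (isSymm_diagonal _)
  have hBq : (B q).PosSemidef :=
    .of_dotProduct_mulVec_nonneg (isHermitian_iff_isSymm.2 (hB q)) (by simpa using hBpsd q)
  have hY : (ω q • (B q + diagonal u.1)).PosDef :=
    (PosDef.posSemidef_add hBq (posDef_diagonal_iff.2 hc)).smul (hω q)
  rw [Zmat_eq_sub_I_smul]
  exact isUnit_sub_I_smul_of_posDef hX.isHermitian_map_ofReal hY.map_ofReal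

/-- For any control `u = (c, s)` with `c_ℓ > 0` for all `ℓ`, the
impedance matrix `Z_q(u)` is invertible. -/
theorem impedance_matrix_invertible
    (Nb Nf : ℕ) (hNb : 1 ≤ Nb) (hNf : 1 ≤ Nf)
    (ω : Fin Nf → ℝ) (hω : ∀ q, 0 < ω q)
    (A B : Fin Nf → Matrix (Fin Nb) (Fin Nb) ℝ)
    (hA : ∀ q, (A q).IsSymm) (hB : ∀ q, (B q).IsSymm)
    (hBpsd : ∀ (q : Fin Nf) (v : Fin Nb → ℝ), 0 ≤ v ⬝ᵥ (B q).mulVec v)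
    (M K : Matrix (Fin Nb) (Fin Nb) ℝ) (hM : M.IsDiag) (hK : K.IsDiag)
    (u : (Fin Nb → ℝ) × (Fin Nb → ℝ)) (hc : ∀ ℓ, 0 < u.1 ℓ)
    (q : Fin Nf) :
    IsUnit (Zmat ω A B M K u q) :=
  impedance_matrix_invertible_general Nb Nf ω hω A B hA hB hBpsd M K hM hK u hc q
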